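/- arXiv:2510.15318 — 4 statements merged into one kernel-verified Lean document; each statement's English description precedes it below -/
import Mathlib

section
/- For every natural number k ≥ 1, there exists a finite sequence of jobs J₁, …, J_k with J_i = (r_i, p_i, s_i), p_i > 0, s_i ≥ 2 p_i, such that the windows are strictly nested: [r_{i+1}, r_{i+1} + p_{i+1} + s_{i+1}) ⊊ [r_i, r_i + p_i + s_i) with p_{i+1} + s_{i+1} < p_i for each i, and all k jobs can be scheduled non-preemptively on a single machine on pairwise disjoint intervals, each job J_i starting at some time t_i with r_i ≤ t_i ≤ r_i + s_i. -/
theorem stmt_5 (k : ℕ) (hk : 1 ≤ k) :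
    ∃ r p s t : ℕ → ℝ,
      (∀ i, i < k → p i > 0 ∧ s i ≥ 2 * p i) ∧
      (∀ i, i + 1 < k →
        r i ≤ r (i + 1) ∧
        r (i + 1) + p (i + 1) + s (i + 1) ≤ r i + p i + s i ∧
        (r i < r (i + 1) ∨ r (i + 1) + p (i + 1) + s (i + 1) < r i + p i + s i) ∧
        p (i + 1) + s (i + 1) < p i) ∧
      (∀ i, i < k → r i ≤ t i ∧ t i ≤ r i + s i) ∧
      (∀ i j, i < k → j < k → i ≠ j →
        t i + p i ≤ t j ∨ t j + p j ≤ t i) := by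
  refine ⟨fun _ => 0, fun i => (1/4:ℝ)^i, fun i => 2 * (1/4:ℝ)^i,
    fun i => ∑ j ∈ Finset.Ico (i+1) k, (1/4:ℝ)^j, ?_, ?_, ?_, ?_⟩
  · intro i _
    constructor
    · positivity
    · exact le_refl _
  · intro i _
    dsimp only
    have h1 : (0:ℝ) < (1/4:ℝ)^i := by positivity
    have h2 : (1/4:ℝ)^(i+1) = (1/4) * (1/4)^i := by ring
    refine ⟨le_refl _, ?_, ?_, ?_⟩ <;> rw [h2] <;> [skip; right; skip] <;> nlinarith
  · intro i _
    dsimp only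
    have hnn : (0:ℝ) ≤ ∑ j ∈ Finset.Ico (i+1) k, (1/4:ℝ)^j :=
      Finset.sum_nonneg (fun j _ => by positivity)
    refine ⟨hnn, ?_⟩
    rcases le_or_gt (i+1) k with h | h
    · have := geom_sum_Ico (x := (1/4:ℝ)) (by norm_num) h
      rw [this]
      have hk0 : (0:ℝ) ≤ (1/4:ℝ)^k := by positivity
      have h2 : (1/4:ℝ)^(i+1) = (1/4) * (1/4)^i := by ring
      have h1 : (0:ℝ) < (1/4:ℝ)^i := by positivity
      rw [div_le_iff_of_neg (by norm_num : (1/4:ℝ) - 1 < 0)]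
      nlinarith
    · rw [Finset.Ico_eq_empty (by omega), Finset.sum_empty]
      positivity
  · intro i j hi hj hne
    dsimp only
    rcases lt_or_gt_of_ne hne with hlt | hlt
    · right
      have hsub : Finset.Ico j k ⊆ Finset.Ico (i+1) k := by
        apply Finset.Ico_subset_Ico (by omega) le_rfl
      have hsplit : ∑ m ∈ Finset.Ico j k, (1/4:ℝ)^m
          = (1/4:ℝ)^j + ∑ m ∈ Finset.Ico (j+1) k, (1/4:ℝ)^m :=
        Finset.sum_eq_sum_Ico_succ_bot hj _
      calc (∑ m ∈ Finset.Ico (j+1) k, (1/4:ℝ)^m) + (1/4:ℝ)^j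
          = ∑ m ∈ Finset.Ico j k, (1/4:ℝ)^m := by rw [hsplit]; ring
        _ ≤ ∑ m ∈ Finset.Ico (i+1) k, (1/4:ℝ)^m :=
            Finset.sum_le_sum_of_subset_of_nonneg hsub (fun m _ _ => by positivity)
    · left
      have hsub : Finset.Ico i k ⊆ Finset.Ico (j+1) k := by
        apply Finset.Ico_subset_Ico (by omega) le_rfl
      have hsplit : ∑ m ∈ Finset.Ico i k, (1/4:ℝ)^m
          = (1/4:ℝ)^i + ∑ m ∈ Finset.Ico (i+1) k, (1/4:ℝ)^m :=
        Finset.sum_eq_sum_Ico_succ_bot hi _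
      calc (∑ m ∈ Finset.Ico (i+1) k, (1/4:ℝ)^m) + (1/4:ℝ)^i
          = ∑ m ∈ Finset.Ico i k, (1/4:ℝ)^m := by rw [hsplit]; ring
        _ ≤ ∑ m ∈ Finset.Ico (j+1) k, (1/4:ℝ)^m :=
            Finset.sum_le_sum_of_subset_of_nonneg hsub (fun m _ _ => by positivity)
end

section
/- Let three jobs be given: J₁ = (r₁, p₁, s₁), J₂ = (r₂, p₂, s₂), J₃ = (r₃, p₃, s₃), with all p_i > 0, s_i ≥ 2p_i, and nesting conditions: there exists a₁ with r₁ ≤ a₁ ≤ r₁ + s₁ such that a₁ < r₂ and r₂ + p₂ + s₂ ≤ a₁ + p₁, and there exists a₂ with r₂ ≤ a₂ ≤ r₂ + s₂ such that a₂ < r₃ and r₃ + p₃ + s₃ ≤ a₂ + p₂. Then there exist start times t₁, t₂, t₃ with r_i ≤ t_i ≤ r_i + s_i for each i such that the intervals [t_i, t_i + p_i) are pairwise disjoint; i.e., all three jobs can be completed by an offline schedule. -/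
theorem stmt_10 (r₁ p₁ s₁ r₂ p₂ s₂ r₃ p₃ s₃ a₁ a₂ : ℝ)
    (hp₁ : p₁ > 0) (hp₂ : p₂ > 0) (hp₃ : p₃ > 0)
    (hs₁ : s₁ ≥ 2 * p₁) (hs₂ : s₂ ≥ 2 * p₂) (hs₃ : s₃ ≥ 2 * p₃)
    (ha₁l : r₁ ≤ a₁) (ha₁u : a₁ ≤ r₁ + s₁)
    (ha₁r₂ : a₁ < r₂) (hd₂ : r₂ + p₂ + s₂ ≤ a₁ + p₁)
    (ha₂l : r₂ ≤ a₂) (ha₂u : a₂ ≤ r₂ + s₂)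
    (ha₂r₃ : a₂ < r₃) (hd₃ : r₃ + p₃ + s₃ ≤ a₂ + p₂) :
    ∃ t₁ t₂ t₃ : ℝ,
      r₁ ≤ t₁ ∧ t₁ ≤ r₁ + s₁ ∧
      r₂ ≤ t₂ ∧ t₂ ≤ r₂ + s₂ ∧
      r₃ ≤ t₃ ∧ t₃ ≤ r₃ + s₃ ∧
      (t₁ + p₁ ≤ t₂ ∨ t₂ + p₂ ≤ t₁) ∧
      (t₁ + p₁ ≤ t₃ ∨ t₃ + p₃ ≤ t₁) ∧
      (t₂ + p₂ ≤ t₃ ∨ t₃ + p₃ ≤ t₂) := by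
  have hp32 : p₃ + s₃ < p₂ := by linarith
  have hp21 : p₂ + s₂ < p₁ := by linarith
  rcases le_or_gt (r₂ + p₂) r₃ with h23 | h23 <;>
  rcases le_or_gt (r₁ + p₁) r₂ with h12 | h12
  · exact ⟨r₁, r₂, r₃, le_refl _, by linarith, le_refl _, by linarith, le_refl _,
      by linarith, Or.inl h12, Or.inl (by linarith), Or.inl h23⟩
  · exact ⟨r₂ + p₂ + s₂, r₂, r₃, by linarith, by linarith, le_refl _, by linarith,
      le_refl _, by linarith, Or.inr (by linarith), Or.inr (by linarith), Or.inl h23⟩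
  · exact ⟨r₁, r₃ + p₃, r₃, le_refl _, by linarith, by linarith, by linarith,
      le_refl _, by linarith, Or.inl (by linarith), Or.inl (by linarith),
      Or.inr (le_refl _)⟩
  · exact ⟨r₂ + p₂ + s₂, r₃ + p₃, r₃, by linarith, by linarith, by linarith,
      by linarith, le_refl _, by linarith, Or.inr (by linarith), Or.inr (by linarith),
      Or.inr (le_refl _)⟩
end

section
/- Let three jobs be given: J₁ = (r₁, p₁, s₁), J₂ = (r₂, p₂, s₂), J₄ = (r₄, p₄, s₄), with all processing times positive, s_i ≥ 2p_i for each, and: r₁ ≤ a₁ ≤ r₁ + s₁ for some a₁ with a₁ < r₂ and r₂ + p₂ + s₂ ≤ a₁ + p₁; and r₂ + s₂ < r₄ with r₄ + p₄ + s₄ ≤ r₂ + p₂ + s₂. Then there exist feasible start times t₁, t₂, t₄ (each satisfying r_i ≤ t_i ≤ r_i + s_i) with pairwise disjoint processing intervals [t_i, t_i + p_i); in fact one can take t₂ = r₂ and t₄ = r₄. -/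
theorem stmt_11 (r₁ p₁ s₁ r₂ p₂ s₂ r₄ p₄ s₄ a₁ : ℝ)
    (hp₁ : p₁ > 0) (hp₂ : p₂ > 0) (hp₄ : p₄ > 0)
    (hs₁ : s₁ ≥ 2 * p₁) (hs₂ : s₂ ≥ 2 * p₂) (hs₄ : s₄ ≥ 2 * p₄)
    (ha₁l : r₁ ≤ a₁) (ha₁u : a₁ ≤ r₁ + s₁)
    (ha₁r₂ : a₁ < r₂) (hd₂ : r₂ + p₂ + s₂ ≤ a₁ + p₁)
    (hr₄ : r₂ + s₂ < r₄) (hd₄ : r₄ + p₄ + s₄ ≤ r₂ + p₂ + s₂) :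
    ∃ t₁ t₂ t₄ : ℝ,
      t₂ = r₂ ∧ t₄ = r₄ ∧
      r₁ ≤ t₁ ∧ t₁ ≤ r₁ + s₁ ∧
      r₂ ≤ t₂ ∧ t₂ ≤ r₂ + s₂ ∧
      r₄ ≤ t₄ ∧ t₄ ≤ r₄ + s₄ ∧
      (t₁ + p₁ ≤ t₂ ∨ t₂ + p₂ ≤ t₁) ∧
      (t₁ + p₁ ≤ t₄ ∨ t₄ + p₄ ≤ t₁) ∧
      (t₂ + p₂ ≤ t₄ ∨ t₄ + p₄ ≤ t₂) := by
  by_cases h : r₁ + p₁ ≤ r₂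
  · exact ⟨r₁, r₂, r₄, rfl, rfl, le_refl _, by linarith, le_refl _, by linarith,
      le_refl _, by linarith, Or.inl h, Or.inl (by linarith), Or.inl (by linarith)⟩
  · push_neg at h
    refine ⟨r₄ + p₄, r₂, r₄, rfl, rfl, by linarith, by linarith, le_refl _, by linarith,
      le_refl _, by linarith, Or.inr (by linarith), Or.inr (le_refl _), Or.inl (by linarith)⟩
end

section
/- Suppose jobs J₁, …, J_k (k ≥ 1) with J_i = (r_i, p_i, s_i), p_i > 0, s_i ≥ 2p_i, satisfy: for each i < k, the window of J_{i+1} fits in a side position of J_i, meaning either (A) there is a_i ∈ [r_i, r_i + s_i] with a_i < r_{i+1} and r_{i+1} + p_{i+1} + s_{i+1} ≤ a_i + p_i, or (B) r_i + s_i < r_{i+1} and r_{i+1} + p_{i+1} + s_{i+1} ≤ r_i + p_i + s_i. Then there exist start times t₁, …, t_k with r_i ≤ t_i ≤ r_i + s_i and pairwise disjoint intervals [t_i, t_i + p_i), i.e., all k jobs are simultaneously schedulable on one machine. -/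
lemma step_aux (i k : ℕ) (r p s : ℕ → ℝ) (t' : ℕ → ℝ) (T : ℝ)
    (hinv : ∀ j, i + 1 ≤ j → j ≤ k → r j ≤ t' j ∧ t' j ≤ r j + s j ∧
      r (i + 1) ≤ t' j ∧ t' j + p j ≤ r (i + 1) + p (i + 1) + s (i + 1))
    (hdisj : ∀ j l, i + 1 ≤ j → j ≤ k → i + 1 ≤ l → l ≤ k → j ≠ l →
      t' j + p j ≤ t' l ∨ t' l + p l ≤ t' j)
    (hT1 : r i ≤ T) (hT2 : T ≤ r i + s i) (hT3 : T + p i ≤ r i + p i + s i)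
    (hTside : T + p i ≤ r (i + 1) ∨ r (i + 1) + p (i + 1) + s (i + 1) ≤ T)
    (hwin1 : r i ≤ r (i + 1))
    (hwin2 : r (i + 1) + p (i + 1) + s (i + 1) ≤ r i + p i + s i) :
    ∃ t : ℕ → ℝ,
      (∀ j, i ≤ j → j ≤ k → r j ≤ t j ∧ t j ≤ r j + s j ∧
        r i ≤ t j ∧ t j + p j ≤ r i + p i + s i) ∧
      (∀ j l, i ≤ j → j ≤ k → i ≤ l → l ≤ k → j ≠ l →
        t j + p j ≤ t l ∨ t l + p l ≤ t j) := by
  refine ⟨fun j => if j = i then T else t' j, ?_, ?_⟩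
  · intro j hij hjk
    by_cases hj : j = i
    · subst hj; simp only [if_pos rfl, if_true]
      exact ⟨hT1, hT2, hT1, hT3⟩
    · simp only [if_neg hj]
      obtain ⟨h1, h2, h3, h4⟩ := hinv j (by omega) hjk
      exact ⟨h1, h2, by linarith, by linarith⟩
  · intro j l hij hjk hil hlk hjl
    by_cases hj : j = i
    · subst hj
      simp only [if_pos rfl, if_neg (Ne.symm hjl), if_true]
      obtain ⟨_, _, h3, h4⟩ := hinv l (by omega) hlk
      rcases hTside with h | h
      · exact Or.inl (by linarith)
      · exact Or.inr (by linarith)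
    · by_cases hl : l = i
      · subst hl
        simp only [if_pos rfl, if_neg hj, if_true]
        obtain ⟨_, _, h3, h4⟩ := hinv j (by omega) hjk
        rcases hTside with h | h
        · exact Or.inr (by linarith)
        · exact Or.inl (by linarith)
      · simp only [if_neg hj, if_neg hl]
        exact hdisj j l (by omega) hjk (by omega) hlk hjl

theorem stmt_15 (k : ℕ) (hk : 1 ≤ k) (r p s : ℕ → ℝ)
    (hp : ∀ i, 1 ≤ i → i ≤ k → p i > 0)
    (hs : ∀ i, 1 ≤ i → i ≤ k → s i ≥ 2 * p i)
    (hside : ∀ i, 1 ≤ i → i < k →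
      (∃ a : ℝ, r i ≤ a ∧ a ≤ r i + s i ∧ a < r (i + 1) ∧
        r (i + 1) + p (i + 1) + s (i + 1) ≤ a + p i) ∨
      (r i + s i < r (i + 1) ∧
        r (i + 1) + p (i + 1) + s (i + 1) ≤ r i + p i + s i)) :
    ∃ t : ℕ → ℝ,
      (∀ i, 1 ≤ i → i ≤ k → r i ≤ t i ∧ t i ≤ r i + s i) ∧
      (∀ i j, 1 ≤ i → i ≤ k → 1 ≤ j → j ≤ k → i ≠ j →
        t i + p i ≤ t j ∨ t j + p j ≤ t i) := by
  suffices h : ∀ n i, 1 ≤ i → i + n = k →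
      ∃ t : ℕ → ℝ,
        (∀ j, i ≤ j → j ≤ k → r j ≤ t j ∧ t j ≤ r j + s j ∧
          r i ≤ t j ∧ t j + p j ≤ r i + p i + s i) ∧
        (∀ j l, i ≤ j → j ≤ k → i ≤ l → l ≤ k → j ≠ l →
          t j + p j ≤ t l ∨ t l + p l ≤ t j) by
    obtain ⟨t, h1, h2⟩ := h (k - 1) 1 le_rfl (by omega)
    exact ⟨t, fun i h1i hik => ⟨(h1 i h1i hik).1, (h1 i h1i hik).2.1⟩, h2⟩
  intro n
  induction n with
  | zero =>
    intro i h1i hik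
    refine ⟨r, ?_, ?_⟩
    · intro j hij hjk
      have hji : j = i := by omega
      have hpj := hp j (by omega) hjk
      have hsj := hs j (by omega) hjk
      subst hji
      refine ⟨le_rfl, by linarith, le_rfl, by linarith⟩
    · intro j l hij hjk hil hlk hjl
      exact absurd (by omega : j = l) hjl
  | succ n ih =>
    intro i h1i hik
    obtain ⟨t', hinv, hdisj⟩ := ih (i + 1) (by omega) (by omega)
    have hik' : i < k := by omega
    have hpi := hp i h1i (by omega)
    have hsi := hs i h1i (by omega)
    have hpi1 := hp (i + 1) (by omega) (by omega)
    have hsi1 := hs (i + 1) (by omega) (by omega)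
    rcases hside i h1i hik' with ⟨a, ha1, ha2, ha3, ha4⟩ | ⟨hb1, hb2⟩
    · by_cases hcase : r i + p i ≤ r (i + 1)
      · exact step_aux i k r p s t' (r i) hinv hdisj le_rfl (by linarith)
          (by linarith) (Or.inl hcase) (by linarith) (by linarith)
      · push_neg at hcase
        refine step_aux i k r p s t' (r (i + 1) + p (i + 1) + s (i + 1))
          hinv hdisj ?_ ?_ ?_ (Or.inr le_rfl) (by linarith) (by linarith)
        · linarith
        · linarith
        · linarith
    · exact step_aux i k r p s t' (r i) hinv hdisj le_rfl (by linarith)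
        (by linarith) (Or.inl (by linarith)) (by linarith) hb2
end
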